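/- Consider matrices A_1, …, A_N ∈ ℝ^{d×d}, symmetric positive definite matrices P_1, …, P_N, and scalars λ_s ∈ (0,1) and μ ≥ 1 such that (i) A_iᵀ P_i A_i ≼ λ_s P_i for every i ∈ {1,…,N}, and (ii) ξᵀP_jξ ≤ μ · ξᵀP_iξ for all ξ ∈ ℝ^d and all i, j ∈ {1,…,N}. Let τ ∈ ℕ satisfy τ > ln μ / |ln λ_s|. Then for every switching signal σ satisfying minimum dwell time τ and every initial condition x₀ ∈ ℝ^d, the switched system x(t+1) = A_{σ(t)} x(t), x(0) = x₀, is globally asymptotically stable: x(t) → 0 as t → ∞, and there exists a constant C ≥ 1, depending only on P_1,…,P_N, λ_s, μ, τ (not on σ or x₀), such that ‖x(t)‖ ≤ C‖x₀‖ for all t ∈ ℕ. -/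

import Mathlib

open Matrix Filter

/-- A switching signal `σ : ℕ → Fin N` satisfies minimum dwell time `τ` if its switching
instants `0 = κ_0 < κ_1 < κ_2 < ⋯` (the times at which `σ` changes value, together with
the initial time `0`) satisfy `κ_{m+1} − κ_m ≥ τ`: equivalently, the first time `t > 0`
at which `σ` changes value is `≥ τ`, and any two times at which `σ` changes value are at
least `τ` apart. -/
def MinDwellTime {N : ℕ} (σ : ℕ → Fin N) (τ : ℕ) : Prop :=
  (∀ t : ℕ, 0 < t → σ t ≠ σ (t - 1) → τ ≤ t) ∧
  (∀ s t : ℕ, 0 < s → s < t → σ s ≠ σ (s - 1) → σ t ≠ σ (t - 1) → τ ≤ t - s)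

/-!
Along a trajectory, the mode-dependent Lyapunov function `W t = x tᵀ P (σ t) x t` contracts by
`λ` at every step and grows by at most `μ` at every switch, so `W t ≤ μ ^ n t * λ ^ t * W 0`,
where `n t` counts the switches up to time `t`. Dwell time forces `τ * n t ≤ t`, hence
`W t ≤ (μ ^ (1/τ) * λ) ^ t * W 0`, and the rate `μ ^ (1/τ) * λ` is `< 1` exactly when
`τ > ln μ / |ln λ|`. Since every quadratic form `ξᵀ P i ξ` is comparable to `‖ξ‖²`, this is
exponential decay of `‖x t‖`.
-/

open Finset Topology

theorem inv_norm_smul_mem_sphere_zero_one {E : Type*} [NormedAddCommGroup E] [NormedSpace ℝ E]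
    {x : E} (hx : x ≠ 0) : ‖x‖⁻¹ • x ∈ Metric.sphere (0 : E) 1 := by
  simp [norm_smul, inv_mul_cancel₀ (norm_ne_zero_iff.2 hx)]

namespace Matrix

variable {n : Type*} [Fintype n]

theorem dotProduct_mulVec_smul_self (M : Matrix n n ℝ) (r : ℝ) (x : n → ℝ) :
    r • x ⬝ᵥ M *ᵥ (r • x) = r ^ 2 * (x ⬝ᵥ M *ᵥ x) := by
  simp only [mulVec_smul, smul_dotProduct, dotProduct_smul, smul_eq_mul]
  ring

/-- At `x = 0` both sides vanish, since `‖0‖⁻¹ • 0 = 0`. -/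
theorem dotProduct_mulVec_self_eq_sq_norm_mul (M : Matrix n n ℝ) (x : n → ℝ) :
    x ⬝ᵥ M *ᵥ x = ‖x‖ ^ 2 * (‖x‖⁻¹ • x ⬝ᵥ M *ᵥ (‖x‖⁻¹ • x)) := by
  rcases eq_or_ne x 0 with rfl | hx
  · simp
  rw [dotProduct_mulVec_smul_self, ← mul_assoc, ← mul_pow, mul_inv_cancel₀ (norm_ne_zero_iff.2 hx),
    one_pow, one_mul]

theorem continuous_dotProduct_mulVec_self (M : Matrix n n ℝ) :
    Continuous fun x : n → ℝ => x ⬝ᵥ M *ᵥ x := by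
  simp only [dotProduct, mulVec]
  fun_prop

theorem exists_dotProduct_mulVec_self_le (M : Matrix n n ℝ) :
    ∃ C, ∀ x : n → ℝ, x ⬝ᵥ M *ᵥ x ≤ C * ‖x‖ ^ 2 := by
  obtain ⟨C, hC⟩ := (isCompact_sphere (0 : n → ℝ) 1).exists_bound_of_continuousOn
    (continuous_dotProduct_mulVec_self M).continuousOn
  refine ⟨C, fun x => ?_⟩
  rcases eq_or_ne x 0 with rfl | hx
  · simp
  rw [dotProduct_mulVec_self_eq_sq_norm_mul, mul_comm C]
  gcongr
  exact (le_abs_self _).trans (hC _ (inv_norm_smul_mem_sphere_zero_one hx))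

theorem PosDef.exists_pos_mul_sq_norm_le {M : Matrix n n ℝ} (hM : M.PosDef) :
    ∃ c > 0, ∀ x : n → ℝ, c * ‖x‖ ^ 2 ≤ x ⬝ᵥ M *ᵥ x := by
  rcases isEmpty_or_nonempty n with hn | hn
  · exact ⟨1, one_pos, fun x => by simp [Subsingleton.elim x 0]⟩
  obtain ⟨y, hy, hmin⟩ := (isCompact_sphere (0 : n → ℝ) 1).exists_isMinOn
    (NormedSpace.sphere_nonempty.2 zero_le_one) (continuous_dotProduct_mulVec_self M).continuousOn
  have hy0 : y ≠ 0 := ne_zero_of_mem_unit_sphere ⟨y, hy⟩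
  refine ⟨y ⬝ᵥ M *ᵥ y, by simpa using hM.dotProduct_mulVec_pos hy0, fun x => ?_⟩
  rcases eq_or_ne x 0 with rfl | hx
  · simp
  rw [dotProduct_mulVec_self_eq_sq_norm_mul M x, mul_comm]
  gcongr
  exact hmin (inv_norm_smul_mem_sphere_zero_one hx)

theorem dotProduct_mulVec_mulVec_le_of_posSemidef {A P : Matrix n n ℝ} {lam : ℝ}
    (h : (lam • P - Aᵀ * P * A).PosSemidef) (x : n → ℝ) :
    A *ᵥ x ⬝ᵥ P *ᵥ (A *ᵥ x) ≤ lam * (x ⬝ᵥ P *ᵥ x) := by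
  have hx := h.dotProduct_mulVec_nonneg x
  rw [star_trivial, sub_mulVec, dotProduct_sub, smul_mulVec, dotProduct_smul, smul_eq_mul,
    ← mulVec_mulVec, ← mulVec_mulVec, dotProduct_mulVec x Aᵀ, vecMul_transpose] at hx
  linarith

end Matrix

section Switching

variable {α : Type*} [DecidableEq α]

def switchCount (σ : ℕ → α) (t : ℕ) : ℕ := #{s ∈ Ioc 0 t | σ s ≠ σ (s - 1)}

@[simp]
theorem switchCount_zero (σ : ℕ → α) : switchCount σ 0 = 0 := by
  simp [switchCount]

theorem switchCount_succ (σ : ℕ → α) (t : ℕ) :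
    switchCount σ (t + 1) = switchCount σ t + if σ (t + 1) = σ t then 0 else 1 := by
  have hnotMem : t + 1 ∉ {s ∈ Ioc 0 t | σ s ≠ σ (s - 1)} := by simp
  rw [switchCount, ← insert_Ioc_right_eq_Ioc_add_one t.zero_le, filter_insert, Nat.add_sub_cancel]
  split_ifs <;> simp_all [card_insert_of_notMem hnotMem, switchCount]

theorem le_pow_switchCount_mul_pow_mul (σ : ℕ → α) {W : ℕ → ℝ} {mu lam : ℝ} (hmu : 0 ≤ mu)
    (hlam : 0 ≤ lam)
    (hW : ∀ t, W (t + 1) ≤ mu ^ (if σ (t + 1) = σ t then 0 else 1) * lam * W t) (t : ℕ) :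
    W t ≤ mu ^ switchCount σ t * lam ^ t * W 0 := by
  induction t with
  | zero => simp
  | succ t ih =>
    calc W (t + 1) ≤ mu ^ (if σ (t + 1) = σ t then 0 else 1) * lam * W t := hW t
      _ ≤ mu ^ (if σ (t + 1) = σ t then 0 else 1) * lam *
          (mu ^ switchCount σ t * lam ^ t * W 0) := by
        gcongr
      _ = mu ^ switchCount σ (t + 1) * lam ^ (t + 1) * W 0 := by
        rw [switchCount_succ, pow_add, pow_succ]
        ring

end Switching

theorem MinDwellTime.mul_switchCount_le {N : ℕ} {σ : ℕ → Fin N} {τ : ℕ} (hσ : MinDwellTime σ τ)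
    (t : ℕ) : τ * switchCount σ t ≤ t := by
  rcases Nat.eq_zero_or_pos τ with rfl | hτ
  · simp
  induction t using Nat.strong_induction_on with
  | _ t ih =>
  set S := {s ∈ Ioc 0 t | σ s ≠ σ (s - 1)}
  rcases S.eq_empty_or_nonempty with hS | hS
  · simp [switchCount, S, hS]
  set m := S.max' hS
  have hmS : m ∈ S := S.max'_mem hS
  simp only [S, mem_filter, mem_Ioc] at hmS
  obtain ⟨⟨hm, hmt⟩, hsw⟩ := hmS
  have hsub : S ⊆ insert m {s ∈ Ioc 0 (m - τ) | σ s ≠ σ (s - 1)} := by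
    intro s hs
    rcases (S.le_max' s hs).eq_or_lt with heq | hlt
    · exact heq ▸ mem_insert_self _ _
    simp only [S, mem_filter, mem_Ioc] at hs
    have hgap := hσ.2 s m hs.1.1 hlt hs.2 hsw
    exact mem_insert_of_mem (by simp only [mem_filter, mem_Ioc]; exact ⟨⟨hs.1.1, by omega⟩, hs.2⟩)
  have hτm : τ ≤ m := hσ.1 m hm hsw
  calc τ * switchCount σ t ≤ τ * (switchCount σ (m - τ) + 1) :=
        Nat.mul_le_mul_left _ ((card_le_card hsub).trans (card_insert_le _ _))
    _ ≤ m - τ + τ := by rw [mul_add_one]; gcongr; exact ih _ (by omega)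
    _ ≤ t := by omega

theorem pow_mul_pow_le_rpow_inv_mul_pow {mu lam : ℝ} {τ k t : ℕ} (hmu : 1 ≤ mu) (hlam : 0 ≤ lam)
    (hτ : 0 < τ) (h : τ * k ≤ t) : mu ^ k * lam ^ t ≤ (mu ^ (τ⁻¹ : ℝ) * lam) ^ t := by
  rw [mul_pow, ← Real.rpow_natCast (mu ^ _), ← Real.rpow_mul (by linarith), ← Real.rpow_natCast mu]
  gcongr
  rw [inv_mul_eq_div, le_div_iff₀ (by exact_mod_cast hτ)]
  exact_mod_cast (mul_comm k τ ▸ h)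

theorem rpow_inv_mul_lt_one {mu lam : ℝ} {τ : ℕ} (hmu : 0 < mu) (hlam0 : 0 < lam) (hlam1 : lam < 1)
    (hτ0 : 0 < τ) (hτ : Real.log mu / |Real.log lam| < τ) : mu ^ (τ⁻¹ : ℝ) * lam < 1 := by
  have hlog : Real.log lam < 0 := Real.log_neg hlam0 hlam1
  rw [abs_of_neg hlog, div_lt_iff₀ (neg_pos.2 hlog)] at hτ
  refine (Real.log_neg_iff (by positivity)).1 ?_
  rw [Real.log_mul (by positivity) hlam0.ne', Real.log_rpow hmu]
  have : (0 : ℝ) < τ := by exact_mod_cast hτ0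
  field_simp
  nlinarith

theorem tendsto_zero_and_norm_le_of_sq_norm_le {E : Type*} [SeminormedAddCommGroup E]
    {x : ℕ → E} {K ρ : ℝ} (hρ0 : 0 ≤ ρ) (hρ1 : ρ < 1)
    (h : ∀ t, ‖x t‖ ^ 2 ≤ K * ρ ^ t * ‖x 0‖ ^ 2) :
    Tendsto x atTop (𝓝 0) ∧ ∀ t, ‖x t‖ ≤ max 1 √K * ‖x 0‖ := by
  have hbound : ∀ t, ‖x t‖ ≤ √K * √(ρ ^ t) * ‖x 0‖ := fun t => by
    simpa [Real.sqrt_mul' _ (sq_nonneg _), Real.sqrt_mul' _ (pow_nonneg hρ0 t)] using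
      Real.abs_le_sqrt (h t)
  refine ⟨squeeze_zero_norm hbound ?_, fun t => (hbound t).trans ?_⟩
  · simpa using
      (((tendsto_pow_atTop_nhds_zero_of_lt_one hρ0 hρ1).sqrt).const_mul √K).mul_const ‖x 0‖
  · gcongr
    calc √K * √(ρ ^ t) ≤ √K * 1 := by gcongr; exact Real.sqrt_le_one.2 (pow_le_one₀ hρ0 hρ1.le)
      _ ≤ max 1 √K := by simp

theorem switched_lyapunov_le_pow_switchCount {n ι : Type*} [Fintype n] [DecidableEq ι]
    {A P : ι → Matrix n n ℝ} {lam mu : ℝ} (hlam : 0 ≤ lam) (hmu : 0 ≤ mu)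
    (hLyap : ∀ i, (lam • P i - (A i)ᵀ * P i * A i).PosSemidef)
    (hcomp : ∀ (i j : ι) (ξ : n → ℝ), ξ ⬝ᵥ P j *ᵥ ξ ≤ mu * (ξ ⬝ᵥ P i *ᵥ ξ))
    {σ : ℕ → ι} {x : ℕ → n → ℝ} (hx : ∀ t, x (t + 1) = A (σ t) *ᵥ x t) (t : ℕ) :
    x t ⬝ᵥ P (σ t) *ᵥ x t ≤ mu ^ switchCount σ t * lam ^ t * (x 0 ⬝ᵥ P (σ 0) *ᵥ x 0) := by
  refine le_pow_switchCount_mul_pow_mul σ (W := fun t => x t ⬝ᵥ P (σ t) *ᵥ x t) hmu hlam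
    (fun t => ?_) t
  have hswitch : x (t + 1) ⬝ᵥ P (σ (t + 1)) *ᵥ x (t + 1)
      ≤ mu ^ (if σ (t + 1) = σ t then 0 else 1) * (x (t + 1) ⬝ᵥ P (σ t) *ᵥ x (t + 1)) := by
    split_ifs with h
    · rw [h, pow_zero, one_mul]
    · rw [pow_one]; exact hcomp _ _ _
  calc _ ≤ _ := hswitch
    _ ≤ mu ^ (if σ (t + 1) = σ t then 0 else 1) * (lam * (x t ⬝ᵥ P (σ t) *ᵥ x t)) := by
      rw [hx]
      gcongr
      exact Matrix.dotProduct_mulVec_mulVec_le_of_posSemidef (hLyap _) _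
    _ = _ := by ring

theorem MinDwellTime.switched_lyapunov_le_pow {N : ℕ} {n : Type*} [Fintype n]
    {A P : Fin N → Matrix n n ℝ} {lam mu : ℝ} {σ : ℕ → Fin N} {τ : ℕ} (hσ : MinDwellTime σ τ)
    (hτ : 0 < τ) (hP : ∀ i, (P i).PosSemidef) (hlam : 0 ≤ lam) (hmu : 1 ≤ mu)
    (hLyap : ∀ i, (lam • P i - (A i)ᵀ * P i * A i).PosSemidef)
    (hcomp : ∀ (i j : Fin N) (ξ : n → ℝ), ξ ⬝ᵥ P j *ᵥ ξ ≤ mu * (ξ ⬝ᵥ P i *ᵥ ξ))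
    {x : ℕ → n → ℝ} (hx : ∀ t, x (t + 1) = A (σ t) *ᵥ x t) (t : ℕ) :
    x t ⬝ᵥ P (σ t) *ᵥ x t ≤ (mu ^ (τ⁻¹ : ℝ) * lam) ^ t * (x 0 ⬝ᵥ P (σ 0) *ᵥ x 0) := by
  have hW0 : 0 ≤ x 0 ⬝ᵥ P (σ 0) *ᵥ x 0 := by
    simpa using (hP (σ 0)).dotProduct_mulVec_nonneg (x 0)
  refine (switched_lyapunov_le_pow_switchCount hlam (by linarith) hLyap hcomp hx t).trans ?_
  gcongr
  exact pow_mul_pow_le_rpow_inv_mul_pow hmu hlam hτ (hσ.mul_switchCount_le t)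

theorem dwell_time_implies_GAS_general
    {d N : ℕ}
    (A P : Fin N → Matrix (Fin d) (Fin d) ℝ)
    (hP : ∀ i, (P i).PosDef)
    (lam mu : ℝ) (hlam0 : 0 < lam) (hlam1 : lam < 1) (hmu : 1 ≤ mu)
    (hLyap : ∀ i, (lam • P i - (A i)ᵀ * P i * A i).PosSemidef)
    (hcomp : ∀ (i j : Fin N) (ξ : Fin d → ℝ),
      ξ ⬝ᵥ (P j).mulVec ξ ≤ mu * (ξ ⬝ᵥ (P i).mulVec ξ))
    (τ : ℕ) (hτ : Real.log mu / |Real.log lam| < (τ : ℝ)) :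
    ∃ C : ℝ, 1 ≤ C ∧
      ∀ σ : ℕ → Fin N, MinDwellTime σ τ →
        ∀ (x₀ : Fin d → ℝ) (x : ℕ → Fin d → ℝ),
          x 0 = x₀ → (∀ t : ℕ, x (t + 1) = (A (σ t)).mulVec (x t)) →
          Tendsto x atTop (nhds 0) ∧ ∀ t : ℕ, ‖x t‖ ≤ C * ‖x₀‖ := by
  rcases isEmpty_or_nonempty (Fin N) with hN | ⟨⟨i₀⟩⟩
  · exact ⟨1, le_rfl, fun σ => isEmptyElim (σ 0)⟩
  -- `hcomp` transfers the norm bounds of the single form `P i₀` to every `P i`.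
  obtain ⟨c, hc, hlow⟩ := (hP i₀).exists_pos_mul_sq_norm_le
  obtain ⟨C', hup⟩ := (P i₀).exists_dotProduct_mulVec_self_le
  have hτ0 : 0 < τ := by
    exact_mod_cast (div_nonneg (Real.log_nonneg hmu) (abs_nonneg _)).trans_lt hτ
  set ρ := mu ^ (τ⁻¹ : ℝ) * lam
  have hρ1 : ρ < 1 := rpow_inv_mul_lt_one (by linarith) hlam0 hlam1 hτ0 hτ
  refine ⟨max 1 √(mu ^ 2 * C' / c), le_max_left _ _, fun σ hσ x₀ x hx0 hx => ?_⟩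
  subst hx0
  refine tendsto_zero_and_norm_le_of_sq_norm_le (by positivity) hρ1 fun t => ?_
  have hdecay := hσ.switched_lyapunov_le_pow hτ0 (fun i => (hP i).posSemidef) hlam0.le hmu
    hLyap hcomp hx t
  have hnorm : c * ‖x t‖ ^ 2 ≤ mu ^ 2 * C' * ρ ^ t * ‖x 0‖ ^ 2 :=
    calc c * ‖x t‖ ^ 2 ≤ x t ⬝ᵥ P i₀ *ᵥ x t := hlow _
      _ ≤ mu * (x t ⬝ᵥ P (σ t) *ᵥ x t) := hcomp _ _ _
      _ ≤ mu * (ρ ^ t * (mu * (x 0 ⬝ᵥ P i₀ *ᵥ x 0))) := by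
        gcongr
        exact hdecay.trans (by gcongr; exact hcomp _ _ _)
      _ ≤ mu * (ρ ^ t * (mu * (C' * ‖x 0‖ ^ 2))) := by gcongr; exact hup _
      _ = mu ^ 2 * C' * ρ ^ t * ‖x 0‖ ^ 2 := by ring
  rw [mul_assoc, div_mul_eq_mul_div, le_div_iff₀ hc]
  linarith

/-- Given `A_i`, symmetric positive definite `P_i`, `λ_s ∈ (0,1)` and
`μ ≥ 1` with `A_iᵀP_iA_i ≼ λ_s P_i` and `ξᵀP_jξ ≤ μ ξᵀP_iξ`, and `τ ∈ ℕ` with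
`τ > ln μ / |ln λ_s|`: for every switching signal `σ` with minimum dwell time `τ` and
every `x₀`, the switched system is GAS — `x(t) → 0` — and there is a constant `C ≥ 1`,
independent of `σ` and `x₀`, with `‖x(t)‖ ≤ C‖x₀‖` for all `t`. -/
theorem dwell_time_implies_GAS
    {d N : ℕ} (hd : 0 < d)
    (A P : Fin N → Matrix (Fin d) (Fin d) ℝ)
    (hP : ∀ i, (P i).PosDef)
    (lam mu : ℝ) (hlam0 : 0 < lam) (hlam1 : lam < 1) (hmu : 1 ≤ mu)
    (hLyap : ∀ i, (lam • P i - (A i)ᵀ * P i * A i).PosSemidef)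
    (hcomp : ∀ (i j : Fin N) (ξ : Fin d → ℝ),
      ξ ⬝ᵥ (P j).mulVec ξ ≤ mu * (ξ ⬝ᵥ (P i).mulVec ξ))
    (τ : ℕ) (hτ : Real.log mu / |Real.log lam| < (τ : ℝ)) :
    ∃ C : ℝ, 1 ≤ C ∧
      ∀ σ : ℕ → Fin N, MinDwellTime σ τ →
        ∀ (x₀ : Fin d → ℝ) (x : ℕ → Fin d → ℝ),
          x 0 = x₀ → (∀ t : ℕ, x (t + 1) = (A (σ t)).mulVec (x t)) →
          Tendsto x atTop (nhds 0) ∧ ∀ t : ℕ, ‖x t‖ ≤ C * ‖x₀‖ :=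
  dwell_time_implies_GAS_general A P hP lam mu hlam0 hlam1 hmu hLyap hcomp τ hτ
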